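/- On the Lie algebra 𝔫₁₂ (ℝ⁷ with nonzero basis brackets [e₁,e₂] = (√3/6)e₄, [e₁,e₃] = (√3/12)e₅ − (1/4)e₆, [e₂,e₃] = −(1/4)e₅ − (√3/12)e₆, [e₃,e₄] = −(√3/6)e₇, [e₁,e₅] = −(1/4)e₇, [e₁,e₆] = (√3/12)e₇, [e₂,e₅] = (√3/12)e₇, [e₂,e₆] = (1/4)e₇), the alternating 3-form φ₁₂ = −e^{124} + e^{135} + e^{167} − e^{236} + e^{257} + e^{347} − e^{456} is closed with respect to the Chevalley–Eilenberg differential: dφ₁₂ = 0. -/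
import Mathlib


/-- The basic alternating 3-form `e^{(i+1)(j+1)(k+1)} = eⁱ⁺¹∧eʲ⁺¹∧eᵏ⁺¹`
on ℝ⁷ = Fin 7 → ℝ, evaluated on three vectors (indices are 0-based). -/
def triForm (i j k : Fin 7) (x y z : Fin 7 → ℝ) : ℝ :=
  x i * (y j * z k - y k * z j) - x j * (y i * z k - y k * z i) +
    x k * (y i * z j - y j * z i)

/-- The Chevalley–Eilenberg differential of an alternating 3-form `φ` with
respect to a bracket `br`, evaluated at (x₀,x₁,x₂,x₃):
dφ(x₀,x₁,x₂,x₃) = Σ_{0≤i<j≤3} (−1)^{i+j} φ([xᵢ,xⱼ], …omitting xᵢ,xⱼ…). -/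
def CEdiff (br : (Fin 7 → ℝ) → (Fin 7 → ℝ) → (Fin 7 → ℝ))
    (φ : (Fin 7 → ℝ) → (Fin 7 → ℝ) → (Fin 7 → ℝ) → ℝ)
    (x0 x1 x2 x3 : Fin 7 → ℝ) : ℝ :=
  -φ (br x0 x1) x2 x3 + φ (br x0 x2) x1 x3 - φ (br x0 x3) x1 x2
    - φ (br x1 x2) x0 x3 + φ (br x1 x3) x0 x2 - φ (br x2 x3) x0 x1

/-- The Lie bracket of 𝔫₁₂: [e₁,e₂] = (√3/6)e₄,
[e₁,e₃] = (√3/12)e₅ − (1/4)e₆, [e₂,e₃] = −(1/4)e₅ − (√3/12)e₆,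
[e₃,e₄] = −(√3/6)e₇, [e₁,e₅] = −(1/4)e₇, [e₁,e₆] = (√3/12)e₇,
[e₂,e₅] = (√3/12)e₇, [e₂,e₆] = (1/4)e₇ (0-based indices shifted by one),
extended bilinearly. -/
noncomputable def brN12 (x y : Fin 7 → ℝ) : Fin 7 → ℝ :=
  ![0, 0, 0,
    (Real.sqrt 3 / 6) * (x 0 * y 1 - x 1 * y 0),
    (Real.sqrt 3 / 12) * (x 0 * y 2 - x 2 * y 0)
      - (1 / 4) * (x 1 * y 2 - x 2 * y 1),
    -(1 / 4) * (x 0 * y 2 - x 2 * y 0)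
      - (Real.sqrt 3 / 12) * (x 1 * y 2 - x 2 * y 1),
    -(Real.sqrt 3 / 6) * (x 2 * y 3 - x 3 * y 2)
      - (1 / 4) * (x 0 * y 4 - x 4 * y 0)
      + (Real.sqrt 3 / 12) * (x 0 * y 5 - x 5 * y 0)
      + (Real.sqrt 3 / 12) * (x 1 * y 4 - x 4 * y 1)
      + (1 / 4) * (x 1 * y 5 - x 5 * y 1)]

/-- φ₁₂ = −e^{124} + e^{135} + e^{167} − e^{236} + e^{257} + e^{347} − e^{456}. -/
def phi12 (x y z : Fin 7 → ℝ) : ℝ :=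
  -triForm 0 1 3 x y z + triForm 0 2 4 x y z + triForm 0 5 6 x y z -
    triForm 1 2 5 x y z + triForm 1 4 6 x y z + triForm 2 3 6 x y z -
    triForm 3 4 5 x y z

lemma brN12_0 (x y : Fin 7 → ℝ) : brN12 x y 0 = 0 := rfl
lemma brN12_1 (x y : Fin 7 → ℝ) : brN12 x y 1 = 0 := rfl
lemma brN12_2 (x y : Fin 7 → ℝ) : brN12 x y 2 = 0 := rfl
lemma brN12_3 (x y : Fin 7 → ℝ) :
    brN12 x y 3 = (Real.sqrt 3 / 6) * (x 0 * y 1 - x 1 * y 0) := rfl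
lemma brN12_4 (x y : Fin 7 → ℝ) :
    brN12 x y 4 = (Real.sqrt 3 / 12) * (x 0 * y 2 - x 2 * y 0)
      - (1 / 4) * (x 1 * y 2 - x 2 * y 1) := rfl
lemma brN12_5 (x y : Fin 7 → ℝ) :
    brN12 x y 5 = -(1 / 4) * (x 0 * y 2 - x 2 * y 0)
      - (Real.sqrt 3 / 12) * (x 1 * y 2 - x 2 * y 1) := rfl
lemma brN12_6 (x y : Fin 7 → ℝ) :
    brN12 x y 6 = -(Real.sqrt 3 / 6) * (x 2 * y 3 - x 3 * y 2)
      - (1 / 4) * (x 0 * y 4 - x 4 * y 0)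
      + (Real.sqrt 3 / 12) * (x 0 * y 5 - x 5 * y 0)
      + (Real.sqrt 3 / 12) * (x 1 * y 4 - x 4 * y 1)
      + (1 / 4) * (x 1 * y 5 - x 5 * y 1) := rfl

set_option maxHeartbeats 4000000 in
/-- the 3-form φ₁₂ on the Lie algebra 𝔫₁₂ is closed:
dφ₁₂ = 0. -/
theorem phi12_closed :
    ∀ x0 x1 x2 x3 : Fin 7 → ℝ, CEdiff brN12 phi12 x0 x1 x2 x3 = 0 := by
  intro x0 x1 x2 x3
  have h : Real.sqrt 3 ^ 2 = 3 := Real.sq_sqrt (by norm_num)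
  simp only [CEdiff, phi12, triForm, brN12_0, brN12_1, brN12_2, brN12_3,
    brN12_4, brN12_5, brN12_6]
  ring_nf
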